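/- arXiv:1101.5848 — 3 statements merged into one kernel-verified Lean document; each statement's English description precedes it below -/
import Mathlib

section
/- For the quantized enveloping algebra U over Q(q) with generators e_i, f_i, k_λ, the adjoint action ad(u)(v) = Σ u_{(0)} v S(u_{(1)}) satisfies ad(e_i^{(n)})(k_λ) = ((-1)^n q_i^{n(n-1)}/[n]_{q_i}!) · (∏_{j=0}^{n-1} (q_i^{(λ,α_i^∨)} − q_i^{-2j})) · e_i^n k_λ for every simple root index i, weight λ, and n > 0. -/
noncomputable section

/-- The quantum integer `[n]_t = t^{n-1} + t^{n-3} + ⋯ + t^{-(n-1)}`. -/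
def qInt {F : Type*} [Field F] (t : F) (n : ℕ) : F :=
  ∑ j ∈ Finset.range n, t ^ ((n : ℤ) - 1 - 2 * j)

/-- The quantum factorial `[n]_t!`. -/
def qFac {F : Type*} [Field F] (t : F) (n : ℕ) : F :=
  ∏ m ∈ Finset.range n, qInt t (m + 1)

/-- In the quantized enveloping algebra `U` over `F = ℚ(q)`, with `e = e_i`,
`ki = k_i`, `kiInv = k_i⁻¹`, `kl = k_λ`, `qi = q_i`, `m = (λ, α_i^∨)`, the adjoint action
of the divided power `e_i^{(n)} = e_i^n/[n]_{q_i}!` (namely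
`ad(e_i^{(n)}) = (1/[n]_{q_i}!)·ad(e_i)^n`, where
`ad(e_i)(v) = e_i v - k_i v k_i^{-1} e_i` comes from `Δ(e_i) = e_i⊗1 + k_i⊗e_i` and
`S(e_i) = -k_i^{-1}e_i`) satisfies
`ad(e_i^{(n)})(k_λ) = ((-1)^n q_i^{n(n-1)}/[n]_{q_i}!) (∏_{j=0}^{n-1}(q_i^{(λ,α_i^∨)} - q_i^{-2j})) e_i^n k_λ`
for all `n > 0`. -/
theorem stmt0 {F U : Type*} [Field F] [Ring U] [Algebra F U]
    (qi : F) (hqi : qi ≠ 0)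
    (e ki kiInv kl : U) (m : ℤ)
    (hki : ki * kiInv = 1) (hik : kiInv * ki = 1)
    (hkie : ki * e = qi ^ (2 : ℤ) • (e * ki))
    (hkiInve : kiInv * e = qi ^ (-2 : ℤ) • (e * kiInv))
    (hkle : kl * e = qi ^ m • (e * kl))
    (hkikl : ki * kl = kl * ki) (hkiInvkl : kiInv * kl = kl * kiInv)
    (adE : U → U)
    (hadE : ∀ v : U, adE v = e * v - ki * v * (kiInv * e))
    (n : ℕ) (hn : 0 < n) (hfac : qFac qi n ≠ 0) :
    (qFac qi n)⁻¹ • adE^[n] kl =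
      ((-1 : F) ^ n * qi ^ ((n : ℤ) * ((n : ℤ) - 1)) / qFac qi n *
        ∏ j ∈ Finset.range n, (qi ^ m - qi ^ (-2 * (j : ℤ)))) • (e ^ n * kl) := by
  -- ki commutes with powers of e up to scalar
  have hkien : ∀ k : ℕ, ki * e ^ k = qi ^ (2 * (k : ℤ)) • (e ^ k * ki) := by
    intro k
    induction k with
    | zero => simp
    | succ k ih =>
      rw [pow_succ, ← mul_assoc, ih, smul_mul_assoc, mul_assoc, hkie, mul_smul_comm,
        smul_smul, ← zpow_add₀ hqi, mul_assoc (e ^ k) e ki]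
      congr 1
  -- the key step: adE acting on e^k * kl
  have key : ∀ k : ℕ, adE (e ^ k * kl) =
      e ^ (k + 1) * kl - qi ^ (2 * (k : ℤ) + m) • (e ^ (k + 1) * kl) := by
    intro k
    rw [hadE]
    have h1 : ki * (e ^ k * kl) * (kiInv * e) =
        qi ^ (2 * (k : ℤ) + m) • (e ^ (k + 1) * kl) := by
      have : ki * (e ^ k * kl) * (kiInv * e) = (ki * e ^ k) * (kl * kiInv) * e := by
        noncomm_ring
      rw [this, hkien, ← hkiInvkl, smul_mul_assoc, smul_mul_assoc]
      have : e ^ k * ki * (kiInv * kl) * e = e ^ k * ((ki * kiInv) * (kl * e)) := by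
        noncomm_ring
      rw [this, hki, one_mul, hkle, mul_smul_comm, smul_smul, ← zpow_add₀ hqi, pow_succ]
      rw [mul_assoc]
    rw [h1, ← mul_assoc, ← pow_succ']
  -- scalar linearity of adE
  have hlin : ∀ (c : F) (x : U), adE (c • x) = c • adE x := by
    intro c x
    simp only [hadE, mul_smul_comm, smul_mul_assoc, smul_sub]
  -- main induction
  have main : ∀ k : ℕ, adE^[k] kl =
      ((-1 : F) ^ k * qi ^ ((k : ℤ) * ((k : ℤ) - 1)) *
        ∏ j ∈ Finset.range k, (qi ^ m - qi ^ (-2 * (j : ℤ)))) • (e ^ k * kl) := by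
    intro k
    induction k with
    | zero => simp
    | succ k ih =>
      rw [Function.iterate_succ_apply', ih, hlin, key, smul_sub, smul_smul,
        Finset.prod_range_succ]
      have hsc : (-1 : F) ^ (k + 1) * qi ^ (((k : ℤ) + 1) * (((k : ℤ) + 1) - 1)) *
          ((∏ j ∈ Finset.range k, (qi ^ m - qi ^ (-2 * (j : ℤ)))) *
            (qi ^ m - qi ^ (-2 * (k : ℤ)))) =
          (-1 : F) ^ k * qi ^ ((k : ℤ) * ((k : ℤ) - 1)) *
            (∏ j ∈ Finset.range k, (qi ^ m - qi ^ (-2 * (j : ℤ)))) -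
          (-1 : F) ^ k * qi ^ ((k : ℤ) * ((k : ℤ) - 1)) *
            (∏ j ∈ Finset.range k, (qi ^ m - qi ^ (-2 * (j : ℤ)))) *
            qi ^ (2 * (k : ℤ) + m) := by
        have hexp : qi ^ (((k : ℤ) + 1) * (((k : ℤ) + 1) - 1)) *
            (qi ^ m - qi ^ (-2 * (k : ℤ))) =
            qi ^ ((k : ℤ) * ((k : ℤ) - 1)) * (qi ^ (2 * (k : ℤ) + m) - 1) := by
          have h1 : qi ^ (((k : ℤ) + 1) * (((k : ℤ) + 1) - 1)) * qi ^ m =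
              qi ^ ((k : ℤ) * ((k : ℤ) - 1)) * qi ^ (2 * (k : ℤ) + m) := by
            rw [← zpow_add₀ hqi, ← zpow_add₀ hqi]; congr 1; ring
          have h2 : qi ^ (((k : ℤ) + 1) * (((k : ℤ) + 1) - 1)) * qi ^ (-2 * (k : ℤ)) =
              qi ^ ((k : ℤ) * ((k : ℤ) - 1)) := by
            rw [← zpow_add₀ hqi]; congr 1; ring
          linear_combination h1 - h2
        calc (-1 : F) ^ (k + 1) * qi ^ (((k : ℤ) + 1) * (((k : ℤ) + 1) - 1)) *
              ((∏ j ∈ Finset.range k, (qi ^ m - qi ^ (-2 * (j : ℤ)))) *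
                (qi ^ m - qi ^ (-2 * (k : ℤ))))
            = (-1 : F) ^ (k + 1) *
              (qi ^ (((k : ℤ) + 1) * (((k : ℤ) + 1) - 1)) *
                (qi ^ m - qi ^ (-2 * (k : ℤ)))) *
              (∏ j ∈ Finset.range k, (qi ^ m - qi ^ (-2 * (j : ℤ)))) := by ring
          _ = _ := by rw [hexp]; ring
      push_cast
      rw [hsc]
      rw [sub_smul]
  rw [main n, smul_smul]
  congr 1
  field_simp

end
end

section
/- In the quantized enveloping algebra U over Q(q), for i ≠ j one has ad(e_i^{(n)})(e_j) = Σ_{r=0}^{n} (−1)^r q_i^{r(n−1+a_{ij})} e_i^{(n−r)} e_j e_i^{(r)} when n < 1 − a_{ij}, and ad(e_i^{(n)})(e_j) = 0 when n ≥ 1 − a_{ij}. -/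
/-!
Conjugation by `k_i` scales the monomial `e_i^s e_j e_i^r` by `q_i^{2(s+r)+a}`, so `ad(e_i)` sends
it to `e_i^{s+1} e_j e_i^r - q_i^{2(s+r)+a} e_i^s e_j e_i^{r+1}`. Hence the coefficients of
`ad(e_i)^n e_j` satisfy a `q`-Pascal recursion, whose solution is
`(-1)^r q_i^{r(n-1+a)} [n]! / ([n-r]! [r]!)` by the identity `t^r [r+k] = [k] + t^{r+k} [r]`.
For `n = 1 - a` the power of `q_i` is `1`, so `ad(e_i)^n e_j` is `[n]!` times the Serre relation,
and it stays `0` under further applications of `ad(e_i)`.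
-/

noncomputable section

section QInt

variable {F : Type*} [Field F] {t : F}

lemma qFac_zero : qFac t 0 = 1 := Finset.prod_range_zero _

lemma qFac_succ (n : ℕ) : qFac t (n + 1) = qFac t n * qInt t (n + 1) :=
  Finset.prod_range_succ _ _

lemma qInt_succ_ne_zero (hfac : ∀ n, qFac t n ≠ 0) (n : ℕ) : qInt t (n + 1) ≠ 0 :=
  right_ne_zero_of_mul (qFac_succ (t := t) n ▸ hfac (n + 1))

lemma pow_mul_qInt_add (ht : t ≠ 0) (r k : ℕ) :
    t ^ r * qInt t (r + k) = qInt t k + t ^ (r + k) * qInt t r := by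
  simp only [qInt, Finset.sum_range_add, mul_add, Finset.mul_sum, ← zpow_natCast,
    ← zpow_add₀ ht]
  rw [add_comm]
  congr 1 <;> refine Finset.sum_congr rfl fun j _ => congrArg (t ^ ·) ?_ <;> push_cast <;> ring

/-- The coefficient of `e ^ i * ej * e ^ j` in `ad(e)^(i+j) ej`. -/
def adCoeff (t : F) (a : ℤ) (i j : ℕ) : F :=
  (-1) ^ j * t ^ ((j : ℤ) * (i + j - 1 + a)) * qFac t (i + j) * (qFac t i)⁻¹ * (qFac t j)⁻¹

variable (hfac : ∀ n, qFac t n ≠ 0) (a : ℤ)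
include hfac

lemma adCoeff_zero_right (i : ℕ) : adCoeff t a i 0 = 1 := by
  simp [adCoeff, qFac_zero, hfac]

lemma adCoeff_zero_succ (ht : t ≠ 0) (j : ℕ) :
    adCoeff t a 0 (j + 1) = -t ^ (2 * (j : ℤ) + a) * adCoeff t a 0 j := by
  have hpow : t ^ (((j + 1 : ℕ) : ℤ) * ((j + 1 : ℕ) - 1 + a)) =
      t ^ (2 * (j : ℤ) + a) * t ^ ((j : ℤ) * (j - 1 + a)) := by
    rw [← zpow_add₀ ht]; congr 1; push_cast; ring
  simp only [adCoeff, Nat.cast_zero, zero_add, qFac_zero, inv_one, mul_one, hpow]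
  rw [mul_inv_cancel_right₀ (hfac _), mul_inv_cancel_right₀ (hfac _)]
  ring

lemma adCoeff_succ_succ (ht : t ≠ 0) (i j : ℕ) :
    adCoeff t a (i + 1) (j + 1) =
      adCoeff t a i (j + 1) - t ^ (2 * ((i + j + 1 : ℕ) : ℤ) + a) * adCoeff t a (i + 1) j := by
  -- after writing every power of `t` through `x`, the claim is `pow_mul_qInt_add` up to units
  set x := t ^ ((i : ℤ) + j + a)
  have hqInt := pow_mul_qInt_add ht (j + 1) (i + 1)
  have h1 : t ^ (((j + 1 : ℕ) : ℤ) * ((i + 1 : ℕ) + (j + 1 : ℕ) - 1 + a)) =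
      x ^ (j + 1) * t ^ (j + 1) := by
    rw [← zpow_natCast x, ← zpow_mul, ← zpow_natCast t, ← zpow_add₀ ht]; congr 1; push_cast; ring
  have h2 : t ^ (((j + 1 : ℕ) : ℤ) * ((i : ℕ) + (j + 1 : ℕ) - 1 + a)) = x ^ (j + 1) := by
    rw [← zpow_natCast x, ← zpow_mul]; congr 1; push_cast; ring
  have h3 : t ^ ((j : ℤ) * ((i + 1 : ℕ) + (j : ℕ) - 1 + a)) = x ^ j := by
    rw [← zpow_natCast x, ← zpow_mul]; congr 1; push_cast; ring
  have h4 : t ^ (2 * ((i + j + 1 : ℕ) : ℤ) + a) = x * t ^ (j + 1 + (i + 1)) := by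
    rw [← zpow_natCast t, ← zpow_add₀ ht]; congr 1; push_cast; ring
  simp only [adCoeff, h1, h2, h3, h4, show i + 1 + (j + 1) = i + (j + 1) + 1 by ring,
    show i + (j + 1) = i + 1 + j by ring, qFac_succ (i + 1 + j), qFac_succ i, qFac_succ j]
  have := hfac i; have := hfac j; have := hfac (i + 1 + j)
  have := qInt_succ_ne_zero hfac i; have := qInt_succ_ne_zero hfac j
  field_simp
  rw [show i + 1 + j + 1 = j + 1 + (i + 1) by ring]
  linear_combination (-1 : F) ^ (j + 1) * x ^ (j + 1) * hqInt

lemma inv_qFac_mul_adCoeff (i j : ℕ) :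
    (qFac t (i + j))⁻¹ * adCoeff t a i j =
      (-1) ^ j * t ^ ((j : ℤ) * (i + j - 1 + a)) * (qFac t i)⁻¹ * (qFac t j)⁻¹ := by
  have := hfac (i + j)
  rw [adCoeff]
  field_simp

end QInt

open Finset

theorem LinearMap.iterate_apply_eq_sum_antidiagonal {R M : Type*} [CommSemiring R]
    [AddCommMonoid M] [Module R M] (D : M →ₗ[R] M) (m : ℕ → ℕ → M) (μ : ℕ → R)
    (hD : ∀ i j, D (m i j) = m (i + 1) j + μ (i + j) • m i (j + 1))
    (c : ℕ → ℕ → R) (hc_left : ∀ i, c i 0 = 1) (hc_right : ∀ j, c 0 (j + 1) = μ j * c 0 j)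
    (hc : ∀ i j, c (i + 1) (j + 1) = c i (j + 1) + μ (i + j + 1) * c (i + 1) j) (n : ℕ) :
    D^[n] (m 0 0) = ∑ p ∈ antidiagonal n, c p.1 p.2 • m p.1 p.2 := by
  induction n with
  | zero => simp [hc_left]
  | succ n ih =>
    have hsplit : ∀ p ∈ antidiagonal (n + 1), c p.1 p.2 • m p.1 p.2 =
        (if p.1 = 0 then 0 else c (p.1 - 1) p.2 • m p.1 p.2) +
          (if p.2 = 0 then 0 else (μ n * c p.1 (p.2 - 1)) • m p.1 p.2) := by
      -- the recursion, with the convention `c i (-1) = c (-1) j = 0`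
      rintro ⟨_ | i, _ | j⟩ hp <;> simp only [HasAntidiagonal.mem_antidiagonal] at hp
      · omega
      · simp [hc_right, show j = n by omega]
      · simp [hc_left]
      · simp [hc, ← add_smul, show i + j + 1 = n by omega]
    rw [Function.iterate_succ_apply', ih, map_sum, sum_congr rfl hsplit, sum_add_distrib,
      Nat.sum_antidiagonal_succ, Nat.sum_antidiagonal_succ']
    simp only [if_pos, add_tsub_cancel_right, Nat.add_eq_zero_iff, one_ne_zero, and_false,
      if_false, zero_add, ← sum_add_distrib]
    refine sum_congr rfl fun p hp => ?_
    rw [map_smul, hD, smul_add, smul_smul, mul_comm, HasAntidiagonal.mem_antidiagonal.mp hp]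

section AdAction

variable {F U : Type*} [Field F] [Ring U] [Algebra F U]

lemma semiconjBy_smul_self_iff {k x : U} {c : F} :
    SemiconjBy k x (c • x) ↔ k * x = c • (x * k) := by
  rw [SemiconjBy, smul_mul_assoc]

lemma SemiconjBy.pow_mul_mul_pow {k x y : U} {c d : F} (hx : SemiconjBy k x (c • x))
    (hy : SemiconjBy k y (d • y)) (i j : ℕ) :
    SemiconjBy k (x ^ i * y * x ^ j) ((c ^ i * d * c ^ j) • (x ^ i * y * x ^ j)) := by
  have h := ((hx.pow_right i).mul_right hy).mul_right (hx.pow_right j)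
  rwa [smul_pow, smul_pow, smul_mul_smul_comm, smul_mul_smul_comm] at h

lemma SemiconjBy.mul_mul_mul_inv_mul {k kInv x v : U} {c : F} (hk : k * kInv = 1)
    (hv : SemiconjBy k v (c • v)) : k * v * (kInv * x) = c • (v * x) := by
  rw [hv.eq, mul_assoc, ← mul_assoc k, hk, one_mul, smul_mul_assoc]

variable {qi : F} (hqi : qi ≠ 0) {e ej ki kiInv : U} {a : ℤ} (hki : ki * kiInv = 1)
  (hkie : ki * e = qi ^ (2 : ℤ) • (e * ki)) (hkiej : ki * ej = qi ^ a • (ej * ki))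
include hqi hki hkie hkiej

lemma ad_pow_mul_mul_pow (i j : ℕ) :
    e * (e ^ i * ej * e ^ j) - ki * (e ^ i * ej * e ^ j) * (kiInv * e) =
      e ^ (i + 1) * ej * e ^ j - qi ^ (2 * ((i + j : ℕ) : ℤ) + a) • (e ^ i * ej * e ^ (j + 1)) := by
  have hweight :
      (qi ^ (2 : ℤ)) ^ i * qi ^ a * (qi ^ (2 : ℤ)) ^ j = qi ^ (2 * ((i + j : ℕ) : ℤ) + a) := by
    rw [← zpow_natCast, ← zpow_natCast, ← zpow_mul, ← zpow_mul, ← zpow_add₀ hqi, ← zpow_add₀ hqi]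
    congr 1; push_cast; ring
  have hmono := (semiconjBy_smul_self_iff.mpr hkie).pow_mul_mul_pow
    (semiconjBy_smul_self_iff.mpr hkiej) i j
  rw [hmono.mul_mul_mul_inv_mul hki, hweight, ← mul_assoc, ← mul_assoc, ← pow_succ',
    mul_assoc _ (e ^ j), ← pow_succ]

theorem iterate_ad_eq_sum_adCoeff (hfac : ∀ n, qFac qi n ≠ 0) (adE : U → U)
    (hadE : ∀ v, adE v = e * v - ki * v * (kiInv * e)) (n : ℕ) :
    adE^[n] ej = ∑ p ∈ antidiagonal n, adCoeff qi a p.1 p.2 • (e ^ p.1 * ej * e ^ p.2) := by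
  let D : U →ₗ[F] U :=
    LinearMap.mulLeft F e - (LinearMap.mulRight F (kiInv * e)).comp (LinearMap.mulLeft F ki)
  obtain rfl : adE = D := funext fun v => by simp [D, hadE, mul_assoc]
  simpa using D.iterate_apply_eq_sum_antidiagonal (fun i j => e ^ i * ej * e ^ j)
    (fun k => -qi ^ (2 * (k : ℤ) + a))
    (fun i j => by
      simpa [D, mul_assoc, sub_eq_add_neg] using ad_pow_mul_mul_pow hqi hki hkie hkiej i j)
    (adCoeff qi a) (adCoeff_zero_right hfac a) (adCoeff_zero_succ hfac a hqi)
    (fun i j => by rw [adCoeff_succ_succ hfac a hqi, neg_mul, ← sub_eq_add_neg]) n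

theorem inv_qFac_smul_iterate_ad_eq_sum (hfac : ∀ n, qFac qi n ≠ 0) (adE : U → U)
    (hadE : ∀ v, adE v = e * v - ki * v * (kiInv * e)) (n : ℕ) :
    (qFac qi n)⁻¹ • adE^[n] ej =
      ∑ r ∈ range (n + 1), ((-1 : F) ^ r * qi ^ ((r : ℤ) * ((n : ℤ) - 1 + a)) *
        (qFac qi (n - r))⁻¹ * (qFac qi r)⁻¹) • (e ^ (n - r) * ej * e ^ r) := by
  rw [iterate_ad_eq_sum_adCoeff hqi hki hkie hkiej hfac adE hadE, smul_sum,
    ← Nat.sum_antidiagonal_swap, Nat.sum_antidiagonal_eq_sum_range_succ_mk]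
  refine sum_congr rfl fun r hr => ?_
  obtain ⟨i, rfl⟩ : ∃ i, n = i + r := ⟨n - r, by grind⟩
  rw [Prod.swap_prod_mk, Nat.add_sub_cancel, smul_smul, inv_qFac_mul_adCoeff hfac]
  push_cast
  rfl

end AdAction

theorem stmt2_general {F U : Type*} [Field F] [Ring U] [Algebra F U]
    (qi : F) (hqi : qi ≠ 0)
    (e ej ki kiInv : U) (a : ℤ) (ha : a ≤ 0)
    (hki : ki * kiInv = 1)
    (hkie : ki * e = qi ^ (2 : ℤ) • (e * ki))
    (hkiej : ki * ej = qi ^ a • (ej * ki))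
    (hserre : ∑ r ∈ Finset.range ((1 - a).toNat + 1),
      ((-1 : F) ^ r * (qFac qi ((1 - a).toNat - r))⁻¹ * (qFac qi r)⁻¹) •
        (e ^ ((1 - a).toNat - r) * ej * e ^ r) = 0)
    (adE : U → U)
    (hadE : ∀ v : U, adE v = e * v - ki * v * (kiInv * e))
    (hfac : ∀ r : ℕ, qFac qi r ≠ 0) (n : ℕ) :
    ((n : ℤ) < 1 - a →
      (qFac qi n)⁻¹ • adE^[n] ej =
        ∑ r ∈ Finset.range (n + 1),
          ((-1 : F) ^ r * qi ^ ((r : ℤ) * ((n : ℤ) - 1 + a)) *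
            (qFac qi (n - r))⁻¹ * (qFac qi r)⁻¹) • (e ^ (n - r) * ej * e ^ r)) ∧
    (1 - a ≤ (n : ℤ) → (qFac qi n)⁻¹ • adE^[n] ej = 0) := by
  have hformula := inv_qFac_smul_iterate_ad_eq_sum hqi hki hkie hkiej hfac adE hadE
  refine ⟨fun _ => hformula n, fun hn => ?_⟩
  set N := (1 - a).toNat
  have hN : (N : ℤ) = 1 - a := Int.toNat_of_nonneg (by omega)
  have hvanish : adE^[N] ej = 0 := by
    have h := hformula N
    simp only [hN, sub_sub_cancel_left, neg_add_cancel, mul_zero, zpow_zero, mul_one,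
      hserre] at h
    exact (smul_eq_zero.mp h).resolve_left (inv_ne_zero (hfac N))
  obtain ⟨m, rfl⟩ : ∃ m, n = m + N := ⟨n - N, by omega⟩
  rw [Function.iterate_add_apply, hvanish,
    Function.iterate_fixed (by rw [hadE, mul_zero, mul_zero, zero_mul, sub_zero]), smul_zero]

/-- In the quantized enveloping algebra over `ℚ(q)`, for `i ≠ j` (with `e = e_i`,
`ej = e_j`, `a = a_{ij} ≤ 0`, and the quantum Serre relation as hypothesis `hserre`):
`ad(e_i^{(n)})(e_j) = Σ_{r=0}^{n} (−1)^r q_i^{r(n−1+a_{ij})} e_i^{(n−r)} e_j e_i^{(r)}`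
when `n < 1 − a_{ij}`, and `ad(e_i^{(n)})(e_j) = 0` when `n ≥ 1 − a_{ij}`.
Here `ad(e_i^{(n)}) = (1/[n]_{q_i}!)·ad(e_i)^n` with
`ad(e_i)(v) = e_i v − k_i v k_i^{-1} e_i`, and `e_i^{(r)} = e_i^r/[r]_{q_i}!`. -/
theorem stmt2 {F U : Type*} [Field F] [Ring U] [Algebra F U]
    (qi : F) (hqi : qi ≠ 0)
    (e ej ki kiInv : U) (a : ℤ) (ha : a ≤ 0)
    (hki : ki * kiInv = 1) (hik : kiInv * ki = 1)
    (hkie : ki * e = qi ^ (2 : ℤ) • (e * ki))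
    (hkiInve : kiInv * e = qi ^ (-2 : ℤ) • (e * kiInv))
    (hkiej : ki * ej = qi ^ a • (ej * ki))
    (hkiInvej : kiInv * ej = qi ^ (-a) • (ej * kiInv))
    (hserre : ∑ r ∈ Finset.range ((1 - a).toNat + 1),
      ((-1 : F) ^ r * (qFac qi ((1 - a).toNat - r))⁻¹ * (qFac qi r)⁻¹) •
        (e ^ ((1 - a).toNat - r) * ej * e ^ r) = 0)
    (adE : U → U)
    (hadE : ∀ v : U, adE v = e * v - ki * v * (kiInv * e))
    (hfac : ∀ r : ℕ, qFac qi r ≠ 0) (n : ℕ) :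
    ((n : ℤ) < 1 - a →
      (qFac qi n)⁻¹ • adE^[n] ej =
        ∑ r ∈ Finset.range (n + 1),
          ((-1 : F) ^ r * qi ^ ((r : ℤ) * ((n : ℤ) - 1 + a)) *
            (qFac qi (n - r))⁻¹ * (qFac qi r)⁻¹) • (e ^ (n - r) * ej * e ^ r)) ∧
    (1 - a ≤ (n : ℤ) → (qFac qi n)⁻¹ • adE^[n] ej = 0) :=
  stmt2_general qi hqi e ej ki kiInv a ha hki hkie hkiej hserre adE hadE hfac n
end
end

section
/- Let U_{F,f} = {u ∈ U_F : dim ad(U_F)(u) < ∞} be the locally finite part of the quantized enveloping algebra. Then Δ(U_{F,f}) ⊆ U_F ⊗ U_{F,f}, i.e. the locally finite part is a left coideal subalgebra. -/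
open TensorProduct

noncomputable section

/-- The adjoint action `ad(u)(v) = Σ u₍₀₎ v S(u₍₁₎)` in a Hopf algebra. -/
def ad (F : Type*) {U : Type*} [CommRing F] [Ring U] [HopfAlgebra F U]
    (u v : U) : U :=
  LinearMap.mul' F U
    (TensorProduct.map (LinearMap.mulRight F v) (HopfAlgebra.antipode (R := F))
      (Coalgebra.comul u))

/-- Data of a Drinfeld–Jimbo quantized enveloping algebra: a Hopf algebra `U` over `F`
with Chevalley generators `e i`, `f i`, group-likes `k λ`, simple roots `α i` inside the
weight lattice `Λ`, the values `qp λ μ = q^{(λ,μ)}`, `qi i = q_i`, and coroot pairings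
`cp λ i = (λ, α_i^∨)`. -/
structure QGroupData (F : Type*) [Field F] (I Λ U : Type*) [DecidableEq I] [AddCommGroup Λ]
    [Ring U] [HopfAlgebra F U] where
  e : I → U
  f : I → U
  k : Λ → U
  α : I → Λ
  qi : I → F
  qp : Λ → Λ → F
  cp : Λ → I → ℤ
  qp_ne : ∀ l m, qp l m ≠ 0
  qi_ne : ∀ i, qi i ≠ 0
  qp_add_left : ∀ l l' m, qp (l + l') m = qp l m * qp l' m
  qp_symm : ∀ l m, qp l m = qp m l
  qp_cp : ∀ l i, qp l (α i) = qi i ^ cp l i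
  k_zero : k 0 = 1
  k_add : ∀ l m, k (l + m) = k l * k m
  k_e : ∀ l i, k l * e i = qp l (α i) • (e i * k l)
  k_f : ∀ l i, k l * f i = (qp l (α i))⁻¹ • (f i * k l)
  ef : ∀ i j, e i * f j - f j * e i =
    if i = j then (qi i - (qi i)⁻¹)⁻¹ • (k (α i) - k (-α i)) else 0
  comul_k : ∀ l, Coalgebra.comul (R := F) (k l) = k l ⊗ₜ[F] k l
  comul_e : ∀ i, Coalgebra.comul (R := F) (e i) = e i ⊗ₜ[F] 1 + k (α i) ⊗ₜ[F] e i
  comul_f : ∀ i, Coalgebra.comul (R := F) (f i) = f i ⊗ₜ[F] k (-α i) + 1 ⊗ₜ[F] f i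
  counit_k : ∀ l, Coalgebra.counit (R := F) (k l) = 1
  counit_e : ∀ i, Coalgebra.counit (R := F) (e i) = 0
  counit_f : ∀ i, Coalgebra.counit (R := F) (f i) = 0
  antipode_k : ∀ l, HopfAlgebra.antipode (R := F) (k l) = k (-l)
  antipode_e : ∀ i, HopfAlgebra.antipode (R := F) (e i) = -(k (-α i) * e i)
  antipode_f : ∀ i, HopfAlgebra.antipode (R := F) (f i) = -(f i * k (α i))

/-!
Since `Δ` is multiplicative and the antipode is anti-comultiplicative, for a group-like `k`
`Δ(ad(x)(k)) = Σ x₁ k S(x₃) ⊗ ad(x₂)(k)`, so `Δ(ad(U)(k)) ⊆ U ⊗ ad(U)(k)`. By the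
Joseph–Letzter theorem `U_{F,f}` is spanned by the spaces `ad(U)(k_{-2λ})`, and every `k_{-2λ}`
is group-like.
-/

open Coalgebra HopfAlgebra WithConv

namespace HopfAlgebra

variable {R A ι : Type*} [CommSemiring R] [Semiring A] [HopfAlgebra R A]

lemma sum_antipode_tmul_one_mul_comul {a : A} (ρ : Coalgebra.Repr R a ι) :
    ∑ i ∈ ρ.index, (antipode R (ρ.left i) ⊗ₜ[R] (1 : A)) * comul (ρ.right i) = 1 ⊗ₜ a := by
  let Θ : A ⊗[R] (A ⊗[R] A) →ₗ[R] A ⊗[R] A :=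
    LinearMap.mul' R (A ⊗[R] A) ∘ₗ
      map (Algebra.TensorProduct.includeLeft.toLinearMap ∘ₗ antipode R) LinearMap.id
  calc _ = Θ (∑ i ∈ ρ.index, ∑ j ∈ (ℛ R (ρ.right i)).index,
          ρ.left i ⊗ₜ ((ℛ R (ρ.right i)).left j ⊗ₜ (ℛ R (ρ.right i)).right j)) := by
        simp [Θ, map_sum, ← tmul_sum, (ℛ R _).eq]
    _ = Θ (∑ i ∈ ρ.index, ∑ j ∈ (ℛ R (ρ.left i)).index,
          (ℛ R (ρ.left i)).left j ⊗ₜ ((ℛ R (ρ.left i)).right j ⊗ₜ ρ.right i)) := by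
        rw [sum_tmul_tmul_eq]
    _ = ∑ i ∈ ρ.index, (∑ j ∈ (ℛ R (ρ.left i)).index,
          antipode R ((ℛ R (ρ.left i)).left j) * (ℛ R (ρ.left i)).right j) ⊗ₜ ρ.right i := by
        simp [Θ, map_sum, sum_tmul, Algebra.TensorProduct.tmul_mul_tmul]
    _ = 1 ⊗ₜ a := by
        simp_rw [sum_antipode_mul_eq_smul, smul_tmul, ← tmul_sum, sum_counit_smul]

lemma _root_.LinearMap.comul_left_inv :
    toConv (map (antipode R) (antipode R) ∘ₗ (TensorProduct.comm R A A).toLinearMap ∘ₗ comul) *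
      toConv (comul (R := R) (A := A)) = 1 := by
  ext a
  set ρ := ℛ R a
  let Θ : A ⊗[R] (A ⊗[R] A) →ₗ[R] A ⊗[R] A :=
    LinearMap.mul' R (A ⊗[R] A) ∘ₗ
      map (map (antipode R) (antipode R) ∘ₗ (TensorProduct.comm R A A).toLinearMap) comul ∘ₗ
      (TensorProduct.assoc R A A A).symm.toLinearMap
  calc _ = Θ (∑ i ∈ ρ.index, ∑ j ∈ (ℛ R (ρ.left i)).index,
          (ℛ R (ρ.left i)).left j ⊗ₜ ((ℛ R (ρ.left i)).right j ⊗ₜ ρ.right i)) := by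
        simp only [ρ.convMul_apply, map_sum]
        refine Finset.sum_congr rfl fun i _ => ?_
        simp [Θ, ← (ℛ R (ρ.left i)).eq, Finset.sum_mul]
    _ = Θ (∑ i ∈ ρ.index, ∑ j ∈ (ℛ R (ρ.right i)).index,
          ρ.left i ⊗ₜ ((ℛ R (ρ.right i)).left j ⊗ₜ (ℛ R (ρ.right i)).right j)) := by
        rw [sum_tmul_tmul_eq]
    _ = ∑ i ∈ ρ.index, (1 ⊗ₜ antipode R (ρ.left i)) * ∑ j ∈ (ℛ R (ρ.right i)).index,
          (antipode R ((ℛ R (ρ.right i)).left j) ⊗ₜ 1) * comul ((ℛ R (ρ.right i)).right j) := by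
        simp [Θ, map_sum, Finset.mul_sum, ← mul_assoc, Algebra.TensorProduct.tmul_mul_tmul]
    _ = _ := by
        simp_rw [sum_antipode_tmul_one_mul_comul, Algebra.TensorProduct.tmul_mul_tmul, one_mul,
          ← tmul_sum, sum_antipode_mul_eq_smul]
        simp [Algebra.TensorProduct.one_def, Algebra.algebraMap_eq_smul_one]

/-- `Δ ∘ S` is a right convolution inverse of `Δ` and `(S ⊗ S) ∘ τ ∘ Δ` a left one. -/
theorem comul_antipode (a : A) :
    comul (antipode R a) = map (antipode R) (antipode R) (TensorProduct.comm R A A (comul a)) :=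
  congr($(left_inv_eq_right_inv (M := WithConv (A →ₗ[R] A ⊗[R] A))
    LinearMap.comul_left_inv LinearMap.comul_right_inv).ofConv a).symm

end HopfAlgebra

section Adjoint

variable {F U ι κ : Type*} [CommRing F] [Ring U] [HopfAlgebra F U]

lemma ad_eq_sum {x : U} (ρ : Coalgebra.Repr F x ι) (v : U) :
    ad F x v = ∑ i ∈ ρ.index, ρ.left i * v * antipode F (ρ.right i) := by
  simp [ad, ← ρ.eq, map_sum, mul_assoc]

lemma sum_comul_mul_tmul_mul_antipode {y : U} (ρ : Coalgebra.Repr F y ι) (k v w : U) :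
    ∑ i ∈ ρ.index, comul (ρ.left i) * (k ⊗ₜ[F] v) * (w ⊗ₜ[F] antipode F (ρ.right i)) =
      ∑ i ∈ ρ.index, (ρ.left i * k * w) ⊗ₜ[F] ad F (ρ.right i) v := by
  let Θ : U ⊗[F] (U ⊗[F] U) →ₗ[F] U ⊗[F] U :=
    map (LinearMap.mulRight F (k * w))
      (LinearMap.mul' F U ∘ₗ map (LinearMap.mulRight F v) (antipode F))
  calc _ = Θ (∑ i ∈ ρ.index, ∑ j ∈ (ℛ F (ρ.left i)).index,
          (ℛ F (ρ.left i)).left j ⊗ₜ ((ℛ F (ρ.left i)).right j ⊗ₜ ρ.right i)) := by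
        simp only [map_sum]
        refine Finset.sum_congr rfl fun i _ => ?_
        simp [Θ, ← (ℛ F (ρ.left i)).eq, Finset.sum_mul, Algebra.TensorProduct.tmul_mul_tmul,
          mul_assoc]
    _ = Θ (∑ i ∈ ρ.index, ∑ j ∈ (ℛ F (ρ.right i)).index,
          ρ.left i ⊗ₜ ((ℛ F (ρ.right i)).left j ⊗ₜ (ℛ F (ρ.right i)).right j)) := by
        rw [sum_tmul_tmul_eq]
    _ = _ := by
        simp [Θ, map_sum, ad_eq_sum (ℛ F _), mul_assoc, tmul_sum]

lemma comul_ad_of_comul_eq_tmul {k x : U} (hk : comul (R := F) k = k ⊗ₜ k)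
    (ρ : Coalgebra.Repr F x ι) (ρ₁ : ∀ i, Coalgebra.Repr F (ρ.left i) κ) :
    comul (ad F x k) = ∑ i ∈ ρ.index, ∑ j ∈ (ρ₁ i).index,
      ((ρ₁ i).left j * k * antipode F (ρ.right i)) ⊗ₜ[F] ad F ((ρ₁ i).right j) k := by
  let Θ : U ⊗[F] (U ⊗[F] U) →ₗ[F] U ⊗[F] U :=
    LinearMap.mul' F (U ⊗[F] U) ∘ₗ map (LinearMap.mulRight F (k ⊗ₜ k) ∘ₗ comul)
      (map (antipode F) (antipode F) ∘ₗ (TensorProduct.comm F U U).toLinearMap)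
  calc _ = Θ (∑ i ∈ ρ.index, ∑ j ∈ (ℛ F (ρ.right i)).index,
          ρ.left i ⊗ₜ ((ℛ F (ρ.right i)).left j ⊗ₜ (ℛ F (ρ.right i)).right j)) := by
        simp only [ad_eq_sum ρ, map_sum, Bialgebra.comul_mul, hk, comul_antipode]
        refine Finset.sum_congr rfl fun i _ => ?_
        simp [Θ, ← (ℛ F (ρ.right i)).eq, Finset.mul_sum]
    _ = Θ (∑ i ∈ ρ.index, ∑ j ∈ (ρ₁ i).index,
          (ρ₁ i).left j ⊗ₜ ((ρ₁ i).right j ⊗ₜ ρ.right i)) := by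
        rw [sum_tmul_tmul_eq]
    _ = ∑ i ∈ ρ.index, ∑ j ∈ (ρ₁ i).index, comul ((ρ₁ i).left j) * (k ⊗ₜ k) *
          (antipode F (ρ.right i) ⊗ₜ antipode F ((ρ₁ i).right j)) := by
        simp [Θ, map_sum]
    _ = _ := Finset.sum_congr rfl fun i _ => sum_comul_mul_tmul_mul_antipode (ρ₁ i) k k _

lemma comul_ad_mem_span_tmul_ad {k : U} (hk : comul (R := F) k = k ⊗ₜ k) (x : U) :
    comul (ad F x k) ∈ Submodule.span F {z : U ⊗[F] U | ∃ a y : U, z = a ⊗ₜ[F] ad F y k} := by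
  rw [comul_ad_of_comul_eq_tmul hk (ℛ F x) fun i => ℛ F _]
  exact Submodule.sum_mem _ fun i _ => Submodule.sum_mem _ fun j _ =>
    Submodule.subset_span ⟨_, _, rfl⟩

end Adjoint

theorem stmt5_general {F I Λ U : Type*} [Field F] [DecidableEq I] [AddCommGroup Λ]
    [Ring U] [HopfAlgebra F U] (Q : QGroupData F I Λ U)
    (Uf : Set U)
    (Dom : Set Λ)
    (hJL : Uf = ↑(Submodule.span F
      {v : U | ∃ (x : U) (μ : Λ), μ ∈ Dom ∧ v = ad F x (Q.k (-(2 • μ)))})) :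
    ∀ u ∈ Uf, Coalgebra.comul (R := F) u ∈
      Submodule.span F {z : U ⊗[F] U | ∃ (a b : U), b ∈ Uf ∧ z = a ⊗ₜ[F] b} := by
  intro u hu
  rw [hJL] at hu
  refine Submodule.mem_comap.1 ((Submodule.span_le (p := Submodule.comap comul _)).2 ?_ hu)
  rintro _ ⟨x, μ, hμ, rfl⟩
  refine Submodule.span_mono ?_ (comul_ad_mem_span_tmul_ad (Q.comul_k _) x)
  rintro _ ⟨a, y, rfl⟩
  exact ⟨a, _, hJL ▸ Submodule.subset_span ⟨y, μ, hμ, rfl⟩, rfl⟩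

/-- Lemma 2.6 (first formula): the locally finite part
`U_{F,f} = {u ∈ U_F : dim ad(U_F)(u) < ∞}` of the quantized enveloping algebra is a left
coideal: `Δ(U_{F,f}) ⊆ U_F ⊗ U_{F,f}`.  The Joseph–Letzter description
`U_{F,f} = Σ_{λ∈Λ⁺} ad(U_F)(k_{−2λ})` is supplied as hypothesis `hJL`. -/
theorem stmt5 {F I Λ U : Type*} [Field F] [DecidableEq I] [AddCommGroup Λ]
    [Ring U] [HopfAlgebra F U] (Q : QGroupData F I Λ U)
    (Uf : Set U)
    (hUf : Uf = {u : U | FiniteDimensional F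
      (Submodule.span F (Set.range fun x : U => ad F x u))})
    (Dom : Set Λ) (hDom : Dom = {μ : Λ | ∀ i : I, 0 ≤ Q.cp μ i})
    (hJL : Uf = ↑(Submodule.span F
      {v : U | ∃ (x : U) (μ : Λ), μ ∈ Dom ∧ v = ad F x (Q.k (-(2 • μ)))})) :
    ∀ u ∈ Uf, Coalgebra.comul (R := F) u ∈
      Submodule.span F {z : U ⊗[F] U | ∃ (a b : U), b ∈ Uf ∧ z = a ⊗ₜ[F] b} :=
  stmt5_general Q Uf Dom hJL

end
end
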